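/- arXiv:2309.13903 — 4 statements merged into one kernel-verified Lean document; each statement's English description precedes it below -/
import Mathlib

section
/- The set SO(3) × ℝ³ × ℝ³ × ℝ³ with composition (R₁,v₁,p₁,b₁) • (R₂,v₂,p₂,b₂) = (R₁R₂, v₁ + R₁v₂, p₁ + R₁p₂, b₂ + R₂ᵀb₁) forms a group with identity (I,0,0,0). -/
open Matrix

noncomputable section

abbrev V3 := Fin 3 → ℝ
abbrev M3 := Matrix (Fin 3) (Fin 3) ℝ

/-- `R` is a rotation matrix: orthogonal with determinant one. -/
def IsSO3 (R : M3) : Prop := R * Rᵀ = 1 ∧ R.det = 1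

/-- An element of the Two-Frames Group: `(R, v, p, b)`. -/
abbrev TFGel := M3 × V3 × V3 × V3

/-- The TFG composition law. -/
def tmul (x y : TFGel) : TFGel :=
  (x.1 * y.1, x.2.1 + x.1 *ᵥ y.2.1, x.2.2.1 + x.1 *ᵥ y.2.2.1,
    y.2.2.2 + y.1ᵀ *ᵥ x.2.2.2)

/-- The TFG identity element `(I, 0, 0, 0)`. -/
def tone : TFGel := (1, 0, 0, 0)

/-- The set SO(3) × ℝ³ × ℝ³ × ℝ³ with the TFG composition law forms a group with
identity `(I,0,0,0)`: the law is internal, associative, `(I,0,0,0)` is a two-sided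
identity, and every element has a two-sided inverse. -/
theorem tfg_is_group :
    (∀ x y : TFGel, IsSO3 x.1 → IsSO3 y.1 → IsSO3 (tmul x y).1) ∧
    (∀ x y z : TFGel, tmul (tmul x y) z = tmul x (tmul y z)) ∧
    (IsSO3 tone.1 ∧ ∀ x : TFGel, tmul tone x = x ∧ tmul x tone = x) ∧
    (∀ x : TFGel, IsSO3 x.1 →
      ∃ y : TFGel, IsSO3 y.1 ∧ tmul x y = tone ∧ tmul y x = tone) := by

  refine ⟨?_, ?_, ⟨?_, ?_⟩, ?_⟩
  · rintro x y ⟨hx1, hx2⟩ ⟨hy1, hy2⟩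
    constructor
    · simp [tmul, Matrix.transpose_mul]
      calc x.1 * y.1 * (y.1ᵀ * x.1ᵀ) = x.1 * (y.1 * y.1ᵀ) * x.1ᵀ := by noncomm_ring
        _ = 1 := by rw [hy1]; simpa using hx1
    · simp [tmul, Matrix.det_mul, hx2, hy2]
  · intro x y z
    simp [tmul, Matrix.mulVec_add, Matrix.mulVec_mulVec, Matrix.transpose_mul,
      mul_assoc, add_assoc]
  · exact ⟨by simp [tone, IsSO3], by simp [tone, IsSO3]⟩
  · intro x
    simp only [tmul, tone]
    constructor <;> ext <;> simp
  · rintro x ⟨h1, h2⟩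
    have h1' : x.1ᵀ * x.1 = 1 := by
      have := mul_eq_one_comm.mp h1
      exact this
    refine ⟨(x.1ᵀ, -(x.1ᵀ *ᵥ x.2.1), -(x.1ᵀ *ᵥ x.2.2.1), -(x.1 *ᵥ x.2.2.2)), ?_, ?_, ?_⟩
    · exact ⟨by simpa using h1', by simp [h2]⟩
    · simp [tmul, tone, Matrix.mulVec_neg, Matrix.mulVec_mulVec, h1, h1']
    · simp [tmul, tone, Matrix.mulVec_neg, Matrix.mulVec_mulVec, h1, h1']
end
end

section
/- Define on the TFG the candidate exponential exp_TFG(ξ^R, ξ^v, ξ^p, ξ^b) = (exp((ξ^R)×), ν(ξ^R)ξ^v, ν(ξ^R)ξ^p, ν(−ξ^R)ξ^b), where ν is the left Jacobian of SO(3). If ‖ξ^R‖ < π, then the map (R,v,p,b) ↦ (log(R), ν(log(R))⁻¹v, ν(log(R))⁻¹p, ν(−log(R))⁻¹b) is a two-sided inverse of exp_TFG on its image. -/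
open Matrix

noncomputable section

/-- The skew-symmetric cross-product matrix `(ξ)×`. -/
def skew (ξ : V3) : M3 :=
  !![0, -ξ 2, ξ 1; ξ 2, 0, -ξ 0; -ξ 1, ξ 0, 0]

/-- The Euclidean norm of a vector of `ℝ³`. -/
def nrm (ξ : V3) : ℝ := Real.sqrt (ξ 0 ^ 2 + ξ 1 ^ 2 + ξ 2 ^ 2)

/-- The left Jacobian of SO(3):
`ν(ξ) = I + ((1−cos‖ξ‖)/‖ξ‖²)(ξ)× + ((‖ξ‖−sin‖ξ‖)/‖ξ‖³)(ξ)ײ`. -/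
def nu (ξ : V3) : M3 :=
  1 + ((1 - Real.cos (nrm ξ)) / nrm ξ ^ 2) • skew ξ
    + ((nrm ξ - Real.sin (nrm ξ)) / nrm ξ ^ 3) • (skew ξ * skew ξ)

/-- The candidate TFG exponential:
`exp_TFG(ξ^R, ξ^v, ξ^p, ξ^b) = (exp((ξ^R)×), ν(ξ^R)ξ^v, ν(ξ^R)ξ^p, ν(−ξ^R)ξ^b)`. -/
def expTFG (ξ : V3 × V3 × V3 × V3) : TFGel :=
  (NormedSpace.exp (skew ξ.1), nu ξ.1 *ᵥ ξ.2.1, nu ξ.1 *ᵥ ξ.2.2.1,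
    nu (-ξ.1) *ᵥ ξ.2.2.2)

/-! The proof of `logTFG ∘ expTFG = id` on `‖ξ^R‖ < π` reduces, once `log` undoes the rotation
part, to the invertibility of `ν(±ξ^R)`. Since `(ξ)×` acts on `ξ^⊥` as a rotation by `π/2` scaled
by `‖ξ‖` and kills `ξ`, `ν(ξ)` has eigenvalue `1` along `ξ` and determinant
`2 (1 - cos ‖ξ‖) / ‖ξ‖²`, which vanishes only when `‖ξ‖ ∈ 2πℤ \ {0}`. -/

lemma sq_nrm (x : V3) : nrm x ^ 2 = x 0 ^ 2 + x 1 ^ 2 + x 2 ^ 2 :=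
  Real.sq_sqrt (by positivity)

lemma nrm_nonneg (x : V3) : 0 ≤ nrm x := Real.sqrt_nonneg _

lemma nrm_neg (x : V3) : nrm (-x) = nrm x := by
  simp [nrm]

lemma det_one_add_smul_skew_add_smul_skew_mul_skew (x : V3) (c s : ℝ) :
    (1 + c • skew x + s • (skew x * skew x)).det =
      (1 - s * nrm x ^ 2) ^ 2 + c ^ 2 * nrm x ^ 2 := by
  simp [sq_nrm, skew, Matrix.det_fin_three]
  ring

lemma det_nu_of_nrm_ne_zero {x : V3} (hx : nrm x ≠ 0) :
    (nu x).det = 2 * (1 - Real.cos (nrm x)) / nrm x ^ 2 := by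
  rw [nu, det_one_add_smul_skew_add_smul_skew_mul_skew]
  field_simp
  linear_combination Real.sin_sq_add_cos_sq (nrm x)

lemma det_nu_ne_zero {x : V3} (hx : nrm x < 2 * Real.pi) : (nu x).det ≠ 0 := by
  rcases (nrm_nonneg x).eq_or_lt with h0 | h0
  · simp [nu, ← h0]
  · rw [det_nu_of_nrm_ne_zero h0.ne']
    have hcos : Real.cos (nrm x) ≠ 1 := fun h ↦ h0.ne' <|
      (Real.cos_eq_one_iff_of_lt_of_lt (by linarith [Real.pi_pos]) hx).1 h
    have : 1 - Real.cos (nrm x) ≠ 0 := sub_ne_zero.2 hcos.symm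
    positivity

lemma inv_nu_mulVec_nu_mulVec {x : V3} (hx : nrm x < 2 * Real.pi) (v : V3) :
    (nu x)⁻¹ *ᵥ (nu x *ᵥ v) = v := by
  rw [Matrix.mulVec_mulVec, Matrix.nonsing_inv_mul _ (det_nu_ne_zero hx).isUnit,
    Matrix.one_mulVec]

/-- Given a logarithm `log` on SO(3), inverse of the rotation exponential for
angles `< π`, the map
`(R,v,p,b) ↦ (log R, ν(log R)⁻¹ v, ν(log R)⁻¹ p, ν(−log R)⁻¹ b)` is a two-sided
inverse of `exp_TFG` on the image of `{ξ : ‖ξ^R‖ < π}`. -/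
theorem logTFG_two_sided_inverse (log : M3 → V3)
    (hlog : ∀ ξ : V3, nrm ξ < Real.pi → log (NormedSpace.exp (skew ξ)) = ξ)
    (logTFG : TFGel → V3 × V3 × V3 × V3)
    (hlogTFG : ∀ x : TFGel,
      logTFG x = (log x.1, (nu (log x.1))⁻¹ *ᵥ x.2.1, (nu (log x.1))⁻¹ *ᵥ x.2.2.1,
        (nu (-log x.1))⁻¹ *ᵥ x.2.2.2)) :
    ∀ ξ : V3 × V3 × V3 × V3, nrm ξ.1 < Real.pi →
      logTFG (expTFG ξ) = ξ ∧ expTFG (logTFG (expTFG ξ)) = expTFG ξ := by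
  intro ξ hξ
  have hξ2 : nrm ξ.1 < 2 * Real.pi := by linarith [Real.pi_pos]
  have hξneg : nrm (-ξ.1) < 2 * Real.pi := by rwa [nrm_neg]
  have hleft : logTFG (expTFG ξ) = ξ := by
    rw [hlogTFG, expTFG]
    simp only [hlog ξ.1 hξ, inv_nu_mulVec_nu_mulVec hξ2, inv_nu_mulVec_nu_mulVec hξneg]
  exact ⟨hleft, by rw [hleft]⟩
end
end

section
/- For TFG elements χ₁, χ₂, the adjoint matrices satisfy Ad_{χ₁ • χ₂} = Ad_{χ₁} Ad_{χ₂}, where Ad_{(R,v,p,b)} is the block matrix with diagonal blocks R and first block column (R; (v)× R; (p)× R; R(b)×). -/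
open Matrix

noncomputable section

/-- The adjoint of `(R,v,p,b)`, as the action on `ℝ¹² = ℝ³ × ℝ³ × ℝ³ × ℝ³` of the
block matrix with diagonal blocks `R` and first block column
`(R; (v)× R; (p)× R; R (b)×)`, all other blocks zero. -/
def adAct (x : TFGel) (ξ : V3 × V3 × V3 × V3) : V3 × V3 × V3 × V3 :=
  (x.1 *ᵥ ξ.1,
    skew x.2.1 *ᵥ (x.1 *ᵥ ξ.1) + x.1 *ᵥ ξ.2.1,
    skew x.2.2.1 *ᵥ (x.1 *ᵥ ξ.1) + x.1 *ᵥ ξ.2.2.1,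
    x.1 *ᵥ (skew x.2.2.2 *ᵥ ξ.1) + x.1 *ᵥ ξ.2.2.2)

/-! Since `(a)× w = a ⨯₃ w`, every block of `Ad_{χ₁ • χ₂} = Ad_{χ₁} Ad_{χ₂}` reduces to
`R (a ⨯₃ w) = (R a) ⨯₃ (R w)` for `R ∈ SO(3)`. This is the cofactor identity
`(A v) ⨯₃ (A w) = adj(A)ᵀ (v ⨯₃ w)` together with `adj R = det R • R⁻¹ = Rᵀ`. -/

theorem skew_mulVec (a w : V3) : skew a *ᵥ w = a ⨯₃ w := by
  ext i
  fin_cases i <;> simp [skew, cross_apply, mulVec, dotProduct, Fin.sum_univ_three] <;> ring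

theorem mulVec_cross_mulVec {α : Type*} [CommRing α] (A : Matrix (Fin 3) (Fin 3) α)
    (v w : Fin 3 → α) :
    (A *ᵥ v) ⨯₃ (A *ᵥ w) = A.adjugateᵀ *ᵥ (v ⨯₃ w) := by
  ext i
  fin_cases i <;>
    simp [cross_apply, adjugate_fin_three, mulVec, dotProduct, Fin.sum_univ_three] <;> ring

namespace IsSO3

theorem adjugate_eq_transpose {R : M3} (hR : IsSO3 R) : R.adjugate = Rᵀ := by
  have hinv : R * R.adjugate = 1 := by rw [mul_adjugate, hR.2, one_smul]
  rw [← inv_eq_right_inv hinv, inv_eq_right_inv hR.1]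

theorem mulVec_cross {R : M3} (hR : IsSO3 R) (v w : V3) :
    R *ᵥ (v ⨯₃ w) = (R *ᵥ v) ⨯₃ (R *ᵥ w) := by
  rw [mulVec_cross_mulVec, hR.adjugate_eq_transpose, transpose_transpose]

theorem mulVec_transpose_mulVec {R : M3} (hR : IsSO3 R) (v : V3) : R *ᵥ (Rᵀ *ᵥ v) = v := by
  rw [mulVec_mulVec, hR.1, one_mulVec]

end IsSO3

/-- The TFG adjoint matrices satisfy `Ad_{χ₁ • χ₂} = Ad_{χ₁} Ad_{χ₂}`. -/
theorem adAct_tmul (x y : TFGel) (hx : IsSO3 x.1) (hy : IsSO3 y.1) :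
    ∀ ξ : V3 × V3 × V3 × V3, adAct (tmul x y) ξ = adAct x (adAct y ξ) := by
  obtain ⟨R₁, v₁, p₁, b₁⟩ := x
  obtain ⟨R₂, v₂, p₂, b₂⟩ := y
  rintro ⟨ξR, ξv, ξp, ξb⟩
  have hb : R₂ *ᵥ ((R₂ᵀ *ᵥ b₁) ⨯₃ ξR) = b₁ ⨯₃ (R₂ *ᵥ ξR) := by
    rw [hy.mulVec_cross, hy.mulVec_transpose_mulVec]
  simp only [adAct, tmul, skew_mulVec, ← mulVec_mulVec, map_add, LinearMap.add_apply,
    mulVec_add, hx.mulVec_cross, hb, Prod.mk.injEq, true_and]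
  refine ⟨?_, ?_, ?_⟩ <;> abel
end
end

section
/- The IMU dynamics with accelerometer bias are NOT group affine on the TFG when the rotation increment is nontrivial: for Ω ∈ SO(3) with Ω ≠ I, and f(R,v,p,b) = (RΩ, v + Δt(g + R(a − b)), p + Δt v, b), there exist TFG elements χ, χ', η such that f(χ)⁻¹ f(χ • η) ≠ f(χ')⁻¹ f(χ' • η) (the group error propagation is state-dependent), for generic a, provided the bias component of η is nonzero. -/
open Matrix

noncomputable section

/-- The TFG inverse of `(R, v, p, b)`: `(Rᵀ, −Rᵀv, −Rᵀp, −Rb)`. -/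
def tinv (x : TFGel) : TFGel :=
  (x.1ᵀ, -(x.1ᵀ *ᵥ x.2.1), -(x.1ᵀ *ᵥ x.2.2.1), -(x.1 *ᵥ x.2.2.2))

/-- Discrete-time IMU dynamics on the TFG with a nontrivial rotation increment `Ω`:
`f(R,v,p,b) = (RΩ, v + Δt(g + R(a − b)), p + Δt·v, b)`. -/
def imuDynRot (Ω : M3) (g a : V3) (Δt : ℝ) (x : TFGel) : TFGel :=
  (x.1 * Ω, x.2.1 + Δt • (g + x.1 *ᵥ (a - x.2.2.2)), x.2.2.1 + Δt • x.2.1, x.2.2.2)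

/-!
For `χ = (R, v, p, b)` with `R` orthogonal and `η = (S, w, q, c)`, the bias component of
`f(χ)⁻¹ • f(χ • η)` is `c + (Sᵀ - Ωᵀ Sᵀ Ω) b`. It therefore depends on the bias `b` of the state
as soon as `Sᵀ` does not commute with `Ω`. Such an `S ∈ SO(3)` exists because `SO(3)` has trivial
centre: a matrix commuting with the sign flips `diag(1,-1,-1)`, `diag(-1,1,-1)` is diagonal, one
commuting also with the cyclic permutation matrix is scalar, and a real scalar matrix of
determinant one is the identity.
-/

namespace Matrix

variable {n R : Type*} [Fintype n] [DecidableEq n]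

lemma apply_eq_zero_of_commute_diagonal [CommRing R] [NoZeroDivisors R] {A : Matrix n n R}
    {d : n → R} (h : Commute A (diagonal d)) {i j : n} (hij : d i ≠ d j) : A i j = 0 := by
  have hentry : A i j * d j = d i * A i j := by
    simpa only [mul_diagonal, diagonal_mul] using congrFun₂ h.eq i j
  have hprod : A i j * (d j - d i) = 0 := by linear_combination hentry
  exact (mul_eq_zero.mp hprod).resolve_right (sub_ne_zero.mpr hij.symm)

lemma apply_apply_eq_of_commute_permMatrix [NonAssocSemiring R] {A : Matrix n n R}
    {σ : Equiv.Perm n} (h : Commute A (σ.permMatrix R)) (i j : n) : A (σ i) (σ j) = A i j := by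
  have hentry := congrFun₂ h.eq i (σ j)
  rw [PEquiv.mul_toMatrix_toPEquiv, PEquiv.toMatrix_toPEquiv_mul] at hentry
  simpa using hentry.symm

end Matrix

lemma IsSO3.transpose_mul_self {R : M3} (hR : IsSO3 R) : Rᵀ * R = 1 :=
  mul_eq_one_comm.mp hR.1

lemma IsSO3.transpose {R : M3} (hR : IsSO3 R) : IsSO3 Rᵀ :=
  ⟨by rw [transpose_transpose, hR.transpose_mul_self], by rw [det_transpose, hR.2]⟩

lemma isSO3_one : IsSO3 1 := ⟨by simp, det_one⟩

lemma isSO3_diagonal {d : Fin 3 → ℝ} (hsq : ∀ i, d i * d i = 1) (hprod : ∏ i, d i = 1) :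
    IsSO3 (diagonal d) :=
  ⟨by rw [diagonal_transpose, diagonal_mul_diagonal, ← diagonal_one]; exact congrArg _ (funext hsq),
    by rw [det_diagonal, hprod]⟩

lemma isSO3_permMatrix {σ : Equiv.Perm (Fin 3)} (hσ : Equiv.Perm.sign σ = 1) :
    IsSO3 (σ.permMatrix ℝ) :=
  ⟨by rw [transpose_permMatrix, ← permMatrix_mul, inv_mul_cancel, permMatrix_one],
    by simp [hσ]⟩

lemma eq_one_of_commute_signFlips_of_commute_cycle {Ω : M3} (hdet : Ω.det = 1)
    (h₁ : Commute Ω (diagonal ![1, -1, -1])) (h₂ : Commute Ω (diagonal ![-1, 1, -1]))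
    (hc : Commute Ω ((finRotate 3).permMatrix ℝ)) : Ω = 1 := by
  have hoff : ∀ i j, i ≠ j → Ω i j = 0 := by
    intro i j hij
    by_cases hsep : (![1, -1, -1] : Fin 3 → ℝ) i = ![1, -1, -1] j
    · refine apply_eq_zero_of_commute_diagonal h₂ ?_
      revert hij hsep
      fin_cases i <;> fin_cases j <;> norm_num
    · exact apply_eq_zero_of_commute_diagonal h₁ hsep
  have h11 : Ω 1 1 = Ω 0 0 := apply_apply_eq_of_commute_permMatrix hc 0 0
  have h22 : Ω 2 2 = Ω 0 0 := (apply_apply_eq_of_commute_permMatrix hc 1 1).trans h11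
  have hcube : Ω 0 0 ^ 3 = 1 ^ 3 := by
    rw [det_fin_three, hoff 0 1 (by decide), hoff 0 2 (by decide), hoff 1 0 (by decide),
      hoff 1 2 (by decide), hoff 2 0 (by decide), hoff 2 1 (by decide), h11, h22] at hdet
    linear_combination hdet
  have h00 : Ω 0 0 = 1 := (Odd.pow_inj (by decide)).mp hcube
  ext i j
  by_cases hij : i = j
  · subst hij
    fin_cases i <;> simp [h00, h11, h22]
  · simp [hoff i j hij, one_apply_ne hij]

lemma exists_isSO3_not_commute {Ω : M3} (hdet : Ω.det = 1) (hne : Ω ≠ 1) :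
    ∃ S : M3, IsSO3 S ∧ ¬Commute Ω S := by
  by_contra! hcomm
  exact hne <| eq_one_of_commute_signFlips_of_commute_cycle hdet
    (hcomm _ (isSO3_diagonal (fun i => by fin_cases i <;> norm_num)
      (by simp [Fin.prod_univ_three])))
    (hcomm _ (isSO3_diagonal (fun i => by fin_cases i <;> norm_num)
      (by simp [Fin.prod_univ_three])))
    (hcomm _ (isSO3_permMatrix (by rw [sign_finRotate]; norm_num)))

lemma sub_conj_ne_zero_of_not_commute {Ω T : M3} (hΩ : Ω * Ωᵀ = 1) (hT : ¬Commute Ω T) :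
    T - Ωᵀ * T * Ω ≠ 0 := by
  intro h
  apply hT
  calc Ω * T = Ω * (Ωᵀ * T * Ω) := congrArg (Ω * ·) (sub_eq_zero.mp h)
    _ = T * Ω := by rw [← Matrix.mul_assoc, ← Matrix.mul_assoc, hΩ, Matrix.one_mul]

lemma imuDynRot_errorProp_bias (Ω : M3) (g a : V3) (Δt : ℝ) (χ η : TFGel)
    (hχ : χ.1ᵀ * χ.1 = 1) :
    (tmul (tinv (imuDynRot Ω g a Δt χ)) (imuDynRot Ω g a Δt (tmul χ η))).2.2.2 =
      η.2.2.2 + (η.1ᵀ - Ωᵀ * η.1ᵀ * Ω) *ᵥ χ.2.2.2 := by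
  have hconj : (χ.1 * η.1 * Ω)ᵀ * (χ.1 * Ω) = Ωᵀ * η.1ᵀ * Ω := by
    simp only [transpose_mul, Matrix.mul_assoc]
    rw [← Matrix.mul_assoc χ.1ᵀ, hχ, Matrix.one_mul]
  simp only [tmul, tinv, imuDynRot, mulVec_neg, mulVec_mulVec, hconj, sub_mulVec]
  abel

/-- The IMU dynamics with accelerometer bias are NOT group affine on the TFG when
the rotation increment `Ω ≠ I` is nontrivial: the left-invariant error propagation
`f(χ)⁻¹ • f(χ • η)` is state-dependent for suitable `a`, `g`, `Δt`, and TFG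
elements `χ, χ', η` with nonzero bias component of `η`. -/
theorem imu_rot_not_group_affine (Ω : M3) (hΩ : IsSO3 Ω) (hΩ1 : Ω ≠ 1) :
    ∃ (a g : V3) (Δt : ℝ) (χ χ' η : TFGel), Δt > 0 ∧
      IsSO3 χ.1 ∧ IsSO3 χ'.1 ∧ IsSO3 η.1 ∧ η.2.2.2 ≠ 0 ∧
      tmul (tinv (imuDynRot Ω g a Δt χ)) (imuDynRot Ω g a Δt (tmul χ η)) ≠
        tmul (tinv (imuDynRot Ω g a Δt χ')) (imuDynRot Ω g a Δt (tmul χ' η)) := by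
  obtain ⟨T, hT, hΩT⟩ := exists_isSO3_not_commute hΩ.2 hΩ1
  obtain ⟨b, hb⟩ : ∃ b, (T - Ωᵀ * T * Ω) *ᵥ b ≠ 0 := by
    by_contra! h
    exact sub_conj_ne_zero_of_not_commute hΩ.1 hΩT (ext_iff_mulVec.mpr fun v => by simp [h v])
  refine ⟨0, 0, 1, (1, 0, 0, b), tone, (Tᵀ, 0, 0, fun _ => 1), one_pos, isSO3_one, isSO3_one,
    hT.transpose, Function.ne_iff.mpr ⟨0, one_ne_zero⟩, fun heq => hb ?_⟩
  have hbias := congrArg (·.2.2.2) heq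
  rw [imuDynRot_errorProp_bias _ _ _ _ _ _ (by simp),
    imuDynRot_errorProp_bias _ _ _ _ _ _ (by simp [tone])] at hbias
  simpa [tone] using hbias
end
end
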